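/- arXiv:1703.00542 — 4 statements merged into one kernel-verified Lean document; each statement's English description precedes it below -/
import Mathlib

section
/- For every θ₁, θ₂ ∈ Θ, the maximizers t_{θ₁}, t_{θ₂} of G_{θ₁}, G_{θ₂} respectively satisfy (t_{θ₁} − √(d² + 4 t_{θ₁} d))₊ ≤ t_{θ₂} ≤ t_{θ₁} + √(d² + 4 t_{θ₁} d), where d := ‖θ₁ − θ₂‖₂. -/
open MeasureTheory ProbabilityTheory Real Set


lemma integrable_id_gauss : Integrable (fun x : ℝ => x) (gaussianReal 0 1) := by
  rw [gaussianReal_of_var_ne_zero 0 one_ne_zero,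
    integrable_withDensity_iff (measurable_gaussianPDF 0 1)
      (Filter.Eventually.of_forall fun x => ENNReal.ofReal_lt_top)]
  have hpt : ∀ x : ℝ, x * (gaussianPDF 0 1 x).toReal
      = (√(2 * π * 1))⁻¹ * (x * Real.exp (-(2⁻¹ : ℝ) * x ^ 2)) := by
    intro x
    rw [gaussianPDF, ENNReal.toReal_ofReal (gaussianPDFReal_nonneg _ _ _), gaussianPDFReal]
    push_cast
    ring_nf
  simp_rw [hpt]
  exact (integrable_mul_exp_neg_mul_sq (by norm_num : (0:ℝ) < 2⁻¹)).const_mul _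

lemma integral_id_gauss : ∫ x, x ∂(gaussianReal 0 1) = 0 := by
  have hmap : (gaussianReal 0 1).map (fun x => (-1 : ℝ) * x) = gaussianReal 0 1 := by
    have := gaussianReal_map_const_mul (μ := 0) (v := 1) (-1 : ℝ)
    simpa using this
  have h1 : ∫ x, x ∂(gaussianReal 0 1) = ∫ x, x ∂((gaussianReal 0 1).map (fun x => (-1:ℝ) * x)) := by
    rw [hmap]
  have h2 : ∫ x, x ∂((gaussianReal 0 1).map (fun x => (-1:ℝ) * x))
      = ∫ x, (-1 : ℝ) * x ∂(gaussianReal 0 1) :=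
    integral_map (φ := fun x => (-1:ℝ)*x) (by fun_prop) aestronglyMeasurable_id
  simp only [neg_one_mul] at h1 h2
  rw [h2, integral_neg] at h1
  linarith

lemma map_eval_gausspi {n : ℕ} (i : Fin n) :
    (Measure.pi fun _ : Fin n => gaussianReal 0 1).map (Function.eval i) = gaussianReal 0 1 := by
  refine Measure.ext fun s hs => ?_
  rw [Measure.map_apply (measurable_pi_apply i) hs]
  have hpre : Function.eval i ⁻¹' s
      = Set.pi Set.univ (Function.update (fun _ : Fin n => (Set.univ : Set ℝ)) i s) := by
    ext x
    simp only [Set.mem_preimage, Set.mem_pi, Set.mem_univ, forall_true_left]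
    constructor
    · intro hx j
      rcases eq_or_ne j i with rfl | hj
      · simpa using hx
      · simp [Function.update_of_ne hj]
    · intro hx
      have := hx i
      simpa using this
  rw [hpre, Measure.pi_pi]
  rw [Finset.prod_eq_single i (fun j _ hj => by simp [Function.update_of_ne hj]) (by simp)]
  simp

lemma integrable_eval_gausspi {n : ℕ} (i : Fin n) :
    Integrable (fun x : Fin n → ℝ => x i) (Measure.pi fun _ => gaussianReal 0 1) := by
  have h := integrable_id_gauss
  rw [← map_eval_gausspi i] at h
  exact (integrable_map_measure aestronglyMeasurable_id
    (measurable_pi_apply i).aemeasurable).mp h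

lemma integral_eval_gausspi {n : ℕ} (i : Fin n) :
    ∫ x, x i ∂(Measure.pi fun _ : Fin n => gaussianReal 0 1) = 0 := by
  have h2 : ∫ y, y ∂(Measure.map (Function.eval i) (Measure.pi fun _ : Fin n => gaussianReal 0 1))
      = ∫ x, x i ∂(Measure.pi fun _ : Fin n => gaussianReal 0 1) :=
    integral_map (measurable_pi_apply i).aemeasurable measurable_id.aestronglyMeasurable
  rw [← h2, map_eval_gausspi i]
  exact integral_id_gauss

lemma inner_symm_apply {n : ℕ} (v : EuclideanSpace ℝ (Fin n)) (x : Fin n → ℝ) :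
    (inner ℝ ((EuclideanSpace.equiv (Fin n) ℝ).symm x) v : ℝ) = ∑ i, x i * v i := by
  simp [PiLp.inner_apply, mul_comm]

noncomputable def stdGaussianE (n : ℕ) : Measure (EuclideanSpace ℝ (Fin n)) :=
  Measure.map (⇑(EuclideanSpace.equiv (Fin n) ℝ).symm) (Measure.pi fun _ => gaussianReal 0 1)

lemma integrable_inner_std {n : ℕ} (v : EuclideanSpace ℝ (Fin n)) :
    Integrable (fun z => (inner ℝ z v : ℝ)) (stdGaussianE n) := by
  rw [stdGaussianE, integrable_map_measure
    ((by fun_prop : Continuous fun z : EuclideanSpace ℝ (Fin n) => (inner ℝ z v : ℝ)).aestronglyMeasurable)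
    ((EuclideanSpace.equiv (Fin n) ℝ).symm.continuous.measurable.aemeasurable)]
  have heq : ((fun z => (inner ℝ z v : ℝ)) ∘ ⇑(EuclideanSpace.equiv (Fin n) ℝ).symm)
      = fun x : Fin n → ℝ => ∑ i, x i * v i := funext fun x => inner_symm_apply v x
  rw [heq]
  exact integrable_finset_sum _ fun i _ => (integrable_eval_gausspi i).mul_const (v i)

lemma integral_inner_std {n : ℕ} (v : EuclideanSpace ℝ (Fin n)) :
    ∫ z, (inner ℝ z v : ℝ) ∂(stdGaussianE n) = 0 := by
  rw [stdGaussianE, integral_map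
    ((EuclideanSpace.equiv (Fin n) ℝ).symm.continuous.measurable.aemeasurable)
    ((continuous_id.inner continuous_const).aestronglyMeasurable)]
  simp_rw [inner_symm_apply]
  rw [integral_finset_sum _ fun i _ => (integrable_eval_gausspi i).mul_const (v i)]
  refine Finset.sum_eq_zero fun i _ => ?_
  rw [integral_mul_const, integral_eval_gausspi i, zero_mul]


variable {n : ℕ} {Θ : Set (EuclideanSpace ℝ (Fin n))} {f : EuclideanSpace ℝ (Fin n) → ℝ}

lemma img_bddAbove (hbdd : BddBelow (f '' Θ)) (z θ : EuclideanSpace ℝ (Fin n)) (t : ℝ) :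
    BddAbove ((fun α => (inner ℝ z (α - θ) : ℝ) - f α) '' {α ∈ Θ | ‖α - θ‖ ≤ t}) := by
  obtain ⟨B, hB⟩ := hbdd
  refine ⟨‖z‖ * t - B, ?_⟩
  rintro y ⟨α, ⟨hαΘ, hαt⟩, rfl⟩
  have h1 : (inner ℝ z (α - θ) : ℝ) ≤ ‖z‖ * t :=
    (real_inner_le_norm z (α - θ)).trans (mul_le_mul_of_nonneg_left hαt (norm_nonneg z))
  have h2 : B ≤ f α := hB ⟨α, hαΘ, rfl⟩
  simp only
  linarith

lemma img_nonempty {θ : EuclideanSpace ℝ (Fin n)} (hθ : θ ∈ Θ) {t : ℝ} (ht : 0 ≤ t)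
    (z : EuclideanSpace ℝ (Fin n)) :
    ((fun α => (inner ℝ z (α - θ) : ℝ) - f α) '' {α ∈ Θ | ‖α - θ‖ ≤ t}).Nonempty :=
  ⟨_, ⟨θ, ⟨hθ, by simp [ht]⟩, rfl⟩⟩

lemma sSup_sandwich (hbdd : BddBelow (f '' Θ)) {θ₁ θ₂ : EuclideanSpace ℝ (Fin n)}
    (hθ₁ : θ₁ ∈ Θ) (z : EuclideanSpace ℝ (Fin n)) {t : ℝ} (ht : 0 ≤ t) :
    sSup ((fun α => (inner ℝ z (α - θ₁) : ℝ) - f α) '' {α ∈ Θ | ‖α - θ₁‖ ≤ t})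
      + (inner ℝ z (θ₁ - θ₂) : ℝ)
    ≤ sSup ((fun α => (inner ℝ z (α - θ₂) : ℝ) - f α)
        '' {α ∈ Θ | ‖α - θ₂‖ ≤ t + ‖θ₁ - θ₂‖}) := by
  rw [← le_sub_iff_add_le]
  refine csSup_le (img_nonempty hθ₁ ht z) ?_
  rintro x ⟨α, ⟨hα, hαt⟩, rfl⟩
  have hnorm : ‖α - θ₂‖ ≤ t + ‖θ₁ - θ₂‖ := by
    have h : α - θ₂ = (α - θ₁) + (θ₁ - θ₂) := by abel
    calc ‖α - θ₂‖ ≤ ‖α - θ₁‖ + ‖θ₁ - θ₂‖ := by rw [h]; exact norm_add_le _ _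
      _ ≤ t + ‖θ₁ - θ₂‖ := by linarith
  have hmem : (inner ℝ z (α - θ₂) : ℝ) - f α ∈
      ((fun α => (inner ℝ z (α - θ₂) : ℝ) - f α) '' {α ∈ Θ | ‖α - θ₂‖ ≤ t + ‖θ₁ - θ₂‖}) :=
    ⟨α, ⟨hα, hnorm⟩, rfl⟩
  have hle := le_csSup (img_bddAbove hbdd z θ₂ _) hmem
  have hid : (inner ℝ z (α - θ₂) : ℝ) = inner ℝ z (α - θ₁) + inner ℝ z (θ₁ - θ₂) := by
    rw [← inner_add_right]
    congr 1
    abel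
  simp only
  linarith [hle, hid]

lemma sSup_concave (hconv : Convex ℝ Θ) (hf : ConvexOn ℝ Θ f)
    {θ : EuclideanSpace ℝ (Fin n)} (hθ : θ ∈ Θ) (hbdd : BddBelow (f '' Θ))
    (z : EuclideanSpace ℝ (Fin n)) {a b l m : ℝ} (ha : 0 ≤ a) (hb : 0 ≤ b)
    (hl : 0 ≤ l) (hm : 0 ≤ m) (hlm : l + m = 1) :
    l * sSup ((fun α => (inner ℝ z (α - θ) : ℝ) - f α) '' {α ∈ Θ | ‖α - θ‖ ≤ a})
      + m * sSup ((fun α => (inner ℝ z (α - θ) : ℝ) - f α) '' {α ∈ Θ | ‖α - θ‖ ≤ b})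
    ≤ sSup ((fun α => (inner ℝ z (α - θ) : ℝ) - f α) '' {α ∈ Θ | ‖α - θ‖ ≤ l * a + m * b}) := by
  rcases eq_or_lt_of_le hl with rfl | hlpos
  · have hm1 : m = 1 := by linarith
    subst hm1
    simp
  rcases eq_or_lt_of_le hm with rfl | hmpos
  · have hl1 : l = 1 := by linarith
    subst hl1
    simp
  -- key: for x in image a, y in image b, l*x + m*y ≤ sSup C
  have key : ∀ x ∈ ((fun α => (inner ℝ z (α - θ) : ℝ) - f α) '' {α ∈ Θ | ‖α - θ‖ ≤ a}),
      ∀ y ∈ ((fun α => (inner ℝ z (α - θ) : ℝ) - f α) '' {α ∈ Θ | ‖α - θ‖ ≤ b}),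
      l * x + m * y ≤
        sSup ((fun α => (inner ℝ z (α - θ) : ℝ) - f α) '' {α ∈ Θ | ‖α - θ‖ ≤ l * a + m * b}) := by
    rintro x ⟨α, ⟨hα, hαa⟩, rfl⟩ y ⟨β, ⟨hβ, hβb⟩, rfl⟩
    have hγΘ : l • α + m • β ∈ Θ := hconv hα hβ hl hm hlm
    have hdiff : (l • α + m • β) - θ = l • (α - θ) + m • (β - θ) := by
      calc (l • α + m • β) - θ = (l • α + m • β) - (l • θ + m • θ) := by
            rw [← add_smul, hlm, one_smul]
        _ = l • (α - θ) + m • (β - θ) := by rw [smul_sub, smul_sub]; abel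
    have hnorm : ‖(l • α + m • β) - θ‖ ≤ l * a + m * b := by
      rw [hdiff]
      calc ‖l • (α - θ) + m • (β - θ)‖ ≤ ‖l • (α - θ)‖ + ‖m • (β - θ)‖ := norm_add_le _ _
        _ = l * ‖α - θ‖ + m * ‖β - θ‖ := by
            rw [norm_smul, norm_smul, Real.norm_of_nonneg hl, Real.norm_of_nonneg hm]
        _ ≤ l * a + m * b := by
            gcongr
    have hfle : f (l • α + m • β) ≤ l * f α + m * f β := hf.2 hα hβ hl hm hlm
    have hinner : (inner ℝ z ((l • α + m • β) - θ) : ℝ)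
        = l * inner ℝ z (α - θ) + m * inner ℝ z (β - θ) := by
      rw [hdiff, inner_add_right, real_inner_smul_right, real_inner_smul_right]
    have hmem : (inner ℝ z ((l • α + m • β) - θ) : ℝ) - f (l • α + m • β) ∈
        ((fun α => (inner ℝ z (α - θ) : ℝ) - f α) '' {α ∈ Θ | ‖α - θ‖ ≤ l * a + m * b}) :=
      ⟨l • α + m • β, ⟨hγΘ, hnorm⟩, rfl⟩
    have hle := le_csSup (img_bddAbove hbdd z θ _) hmem
    simp only
    nlinarith [hle, hinner, hfle]
  have hCne := img_nonempty (f := f) hθ (by positivity : (0:ℝ) ≤ l * a + m * b) z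
  have hAne := img_nonempty (f := f) hθ ha z
  have hBne := img_nonempty (f := f) hθ hb z
  set C := sSup ((fun α => (inner ℝ z (α - θ) : ℝ) - f α) '' {α ∈ Θ | ‖α - θ‖ ≤ l * a + m * b})
  have h1 : sSup ((fun α => (inner ℝ z (α - θ) : ℝ) - f α) '' {α ∈ Θ | ‖α - θ‖ ≤ a})
      ≤ (C - m * sSup ((fun α => (inner ℝ z (α - θ) : ℝ) - f α) '' {α ∈ Θ | ‖α - θ‖ ≤ b})) / l := by
    refine csSup_le hAne fun x hx => ?_
    rw [le_div_iff₀ hlpos]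
    have h2 : sSup ((fun α => (inner ℝ z (α - θ) : ℝ) - f α) '' {α ∈ Θ | ‖α - θ‖ ≤ b})
        ≤ (C - l * x) / m := by
      refine csSup_le hBne fun y hy => ?_
      rw [le_div_iff₀ hmpos]
      have := key x hx y hy
      linarith
    rw [le_div_iff₀ hmpos] at h2
    linarith
  rw [le_div_iff₀ hlpos] at h1
  linarith


lemma tangent_bound {M : ℝ → ℝ} {t₁ : ℝ} (ht₁ : 0 ≤ t₁)
    (hconc : ∀ a b l m : ℝ, 0 ≤ a → 0 ≤ b → 0 ≤ l → 0 ≤ m → l + m = 1 →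
      l * M a + m * M b ≤ M (l * a + m * b))
    (hmax : ∀ t, 0 ≤ t → M t - t ^ 2 / 2 ≤ M t₁ - t₁ ^ 2 / 2)
    {t : ℝ} (ht : 0 ≤ t) : M t ≤ M t₁ + t₁ * (t - t₁) := by
  rcases lt_trichotomy t t₁ with hlt | rfl | hgt
  · by_contra hcon
    push_neg at hcon
    have hd : 0 < t₁ - t := by linarith
    set σ := (M t₁ - M t) / (t₁ - t) with hσdef
    have hMσ : σ * (t₁ - t) = M t₁ - M t := div_mul_cancel₀ _ hd.ne'
    have hσlt : σ < t₁ := by rw [hσdef, div_lt_iff₀ hd]; nlinarith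
    set s := max t σ with hsdef
    have hst : t ≤ s := le_max_left _ _
    have hs0 : 0 ≤ s := ht.trans hst
    have hslt : s < t₁ := max_lt hlt hσlt
    have hsgt : 2 * σ - t₁ < s := lt_of_lt_of_le (by linarith) (le_max_right t σ)
    have hl : 0 ≤ (t₁ - s) / (t₁ - t) := div_nonneg (by linarith) hd.le
    have hm : 0 ≤ (s - t) / (t₁ - t) := div_nonneg (by linarith) hd.le
    have hlm : (t₁ - s) / (t₁ - t) + (s - t) / (t₁ - t) = 1 := by field_simp; ring
    have hchord := hconc t t₁ _ _ ht ht₁ hl hm hlm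
    have hcomb : (t₁ - s) / (t₁ - t) * t + (s - t) / (t₁ - t) * t₁ = s := by
      field_simp; ring
    rw [hcomb] at hchord
    have hchord' : (t₁ - s) * M t + (s - t) * M t₁ ≤ (t₁ - t) * M s := by
      have h := mul_le_mul_of_nonneg_left hchord hd.le
      calc (t₁ - s) * M t + (s - t) * M t₁
          = (t₁ - t) * ((t₁ - s) / (t₁ - t) * M t + (s - t) / (t₁ - t) * M t₁) := by
            field_simp
        _ ≤ (t₁ - t) * M s := h
    have h5 : (t₁ - t) * (M s - s ^ 2 / 2) ≤ (t₁ - t) * (M t₁ - t₁ ^ 2 / 2) :=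
      mul_le_mul_of_nonneg_left (hmax s hs0) hd.le
    have hA : 0 < t₁ - s := by linarith
    have hσlt2 : σ < (s + t₁) / 2 := by linarith
    have h6 : (t₁ - s) * (M t₁ - M t) < (t₁ - s) * ((s + t₁) / 2 * (t₁ - t)) := by
      rw [← hMσ]
      exact mul_lt_mul_of_pos_left (mul_lt_mul_of_pos_right hσlt2 hd) hA
    nlinarith [hchord', h5, h6]
  · simp
  · by_contra hcon
    push_neg at hcon
    have hd : 0 < t - t₁ := by linarith
    set σ := (M t - M t₁) / (t - t₁) with hσdef
    have hMσ : σ * (t - t₁) = M t - M t₁ := div_mul_cancel₀ _ hd.ne'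
    have hσgt : t₁ < σ := by rw [hσdef, lt_div_iff₀ hd]; nlinarith
    set s := min t σ with hsdef
    have hst : s ≤ t := min_le_left _ _
    have hsgt : t₁ < s := lt_min hgt hσgt
    have hs0 : 0 ≤ s := ht₁.trans hsgt.le
    have hslt : s < 2 * σ - t₁ := lt_of_le_of_lt (min_le_right t σ) (by linarith)
    have hl : 0 ≤ (t - s) / (t - t₁) := div_nonneg (by linarith) hd.le
    have hm : 0 ≤ (s - t₁) / (t - t₁) := div_nonneg (by linarith) hd.le
    have hlm : (t - s) / (t - t₁) + (s - t₁) / (t - t₁) = 1 := by field_simp; ring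
    have hchord := hconc t₁ t _ _ ht₁ ht hl hm hlm
    have hcomb : (t - s) / (t - t₁) * t₁ + (s - t₁) / (t - t₁) * t = s := by
      field_simp; ring
    rw [hcomb] at hchord
    have hchord' : (t - s) * M t₁ + (s - t₁) * M t ≤ (t - t₁) * M s := by
      have h := mul_le_mul_of_nonneg_left hchord hd.le
      calc (t - s) * M t₁ + (s - t₁) * M t
          = (t - t₁) * ((t - s) / (t - t₁) * M t₁ + (s - t₁) / (t - t₁) * M t) := by
            field_simp
        _ ≤ (t - t₁) * M s := h
    have h5 : (t - t₁) * (M s - s ^ 2 / 2) ≤ (t - t₁) * (M t₁ - t₁ ^ 2 / 2) :=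
      mul_le_mul_of_nonneg_left (hmax s hs0) hd.le
    have hA : 0 < s - t₁ := by linarith
    have hσgt2 : (s + t₁) / 2 < σ := by linarith
    have h6 : (s - t₁) * ((s + t₁) / 2 * (t - t₁)) < (s - t₁) * (M t - M t₁) := by
      rw [← hMσ]
      exact mul_lt_mul_of_pos_left (mul_lt_mul_of_pos_right hσgt2 hd) hA
    nlinarith [hchord', h5, h6]


noncomputable def mfun (n : ℕ) (Θ : Set (EuclideanSpace ℝ (Fin n)))
    (f : EuclideanSpace ℝ (Fin n) → ℝ) (θ : EuclideanSpace ℝ (Fin n)) (t : ℝ) : ℝ :=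
  ∫ z, sSup ((fun α => (inner ℝ z (α - θ) : ℝ) - f α) '' {α ∈ Θ | ‖α - θ‖ ≤ t}) ∂(stdGaussianE n)

variable {n : ℕ} {Θ : Set (EuclideanSpace ℝ (Fin n))} {f : EuclideanSpace ℝ (Fin n) → ℝ}

lemma mfun_sandwich (hbdd : BddBelow (f '' Θ))
    (hInt : ∀ θ ∈ Θ, ∀ t : ℝ, Integrable
      (fun z => sSup ((fun α => (inner ℝ z (α - θ) : ℝ) - f α) '' {α ∈ Θ | ‖α - θ‖ ≤ t}))
      (stdGaussianE n))
    {θ₁ θ₂ : EuclideanSpace ℝ (Fin n)} (hθ₁ : θ₁ ∈ Θ) (hθ₂ : θ₂ ∈ Θ) {t : ℝ} (ht : 0 ≤ t) :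
    mfun n Θ f θ₁ t ≤ mfun n Θ f θ₂ (t + ‖θ₁ - θ₂‖) := by
  unfold mfun
  have hle : ∀ z : EuclideanSpace ℝ (Fin n),
      sSup ((fun α => (inner ℝ z (α - θ₁) : ℝ) - f α) '' {α ∈ Θ | ‖α - θ₁‖ ≤ t})
      ≤ sSup ((fun α => (inner ℝ z (α - θ₂) : ℝ) - f α) '' {α ∈ Θ | ‖α - θ₂‖ ≤ t + ‖θ₁ - θ₂‖})
        - (inner ℝ z (θ₁ - θ₂) : ℝ) := fun z => by
    have := sSup_sandwich hbdd hθ₁ z ht (θ₂ := θ₂)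
    linarith
  have h2 := (hInt θ₂ hθ₂ (t + ‖θ₁ - θ₂‖)).sub (integrable_inner_std (θ₁ - θ₂))
  calc (∫ z, sSup ((fun α => (inner ℝ z (α - θ₁) : ℝ) - f α) '' {α ∈ Θ | ‖α - θ₁‖ ≤ t})
        ∂(stdGaussianE n))
      ≤ ∫ z, (sSup ((fun α => (inner ℝ z (α - θ₂) : ℝ) - f α)
          '' {α ∈ Θ | ‖α - θ₂‖ ≤ t + ‖θ₁ - θ₂‖}) - (inner ℝ z (θ₁ - θ₂) : ℝ))
          ∂(stdGaussianE n) := integral_mono (hInt θ₁ hθ₁ t) h2 hle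
    _ = ∫ z, sSup ((fun α => (inner ℝ z (α - θ₂) : ℝ) - f α)
          '' {α ∈ Θ | ‖α - θ₂‖ ≤ t + ‖θ₁ - θ₂‖}) ∂(stdGaussianE n) := by
        rw [integral_sub (hInt θ₂ hθ₂ _) (integrable_inner_std _), integral_inner_std, sub_zero]

lemma mfun_concave (hconv : Convex ℝ Θ) (hf : ConvexOn ℝ Θ f)
    {θ : EuclideanSpace ℝ (Fin n)} (hθ : θ ∈ Θ) (hbdd : BddBelow (f '' Θ))
    (hInt : ∀ θ ∈ Θ, ∀ t : ℝ, Integrable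
      (fun z => sSup ((fun α => (inner ℝ z (α - θ) : ℝ) - f α) '' {α ∈ Θ | ‖α - θ‖ ≤ t}))
      (stdGaussianE n))
    {a b l m : ℝ} (ha : 0 ≤ a) (hb : 0 ≤ b) (hl : 0 ≤ l) (hm : 0 ≤ m) (hlm : l + m = 1) :
    l * mfun n Θ f θ a + m * mfun n Θ f θ b ≤ mfun n Θ f θ (l * a + m * b) := by
  unfold mfun
  rw [← integral_const_mul, ← integral_const_mul,
    ← integral_add ((hInt θ hθ a).const_mul l) ((hInt θ hθ b).const_mul m)]
  exact integral_mono (((hInt θ hθ a).const_mul l).add ((hInt θ hθ b).const_mul m))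
    (hInt θ hθ (l * a + m * b)) fun z => sSup_concave hconv hf hθ hbdd z ha hb hl hm hlm

theorem stmt9 (n : ℕ) (Θ : Set (EuclideanSpace ℝ (Fin n)))
    (f : EuclideanSpace ℝ (Fin n) → ℝ)
    (hne : Θ.Nonempty) (hcl : IsClosed Θ) (hconv : Convex ℝ Θ) (hf : ConvexOn ℝ Θ f)
    (hbdd : BddBelow (f '' Θ))
    (hInt : ∀ θ ∈ Θ, ∀ t : ℝ, Integrable
      (fun z => sSup ((fun α => (inner ℝ z (α - θ) : ℝ) - f α) '' {α ∈ Θ | ‖α - θ‖ ≤ t}))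
      (stdGaussianE n))
    (θ₁ θ₂ : EuclideanSpace ℝ (Fin n)) (hθ₁ : θ₁ ∈ Θ) (hθ₂ : θ₂ ∈ Θ)
    (t₁ t₂ : ℝ) (ht₁ : t₁ ∈ Set.Ici (0 : ℝ))
    (hmax₁ : IsMaxOn (fun t => mfun n Θ f θ₁ t - t ^ 2 / 2) (Set.Ici 0) t₁)
    (ht₂ : t₂ ∈ Set.Ici (0 : ℝ))
    (hmax₂ : IsMaxOn (fun t => mfun n Θ f θ₂ t - t ^ 2 / 2) (Set.Ici 0) t₂) :
    max (t₁ - Real.sqrt (‖θ₁ - θ₂‖ ^ 2 + 4 * t₁ * ‖θ₁ - θ₂‖)) 0 ≤ t₂ ∧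
      t₂ ≤ t₁ + Real.sqrt (‖θ₁ - θ₂‖ ^ 2 + 4 * t₁ * ‖θ₁ - θ₂‖) := by
  have ht₁' : (0:ℝ) ≤ t₁ := ht₁
  have ht₂' : (0:ℝ) ≤ t₂ := ht₂
  set d := ‖θ₁ - θ₂‖ with hd
  have hd0 : 0 ≤ d := norm_nonneg _
  have hmax₁' : ∀ t, 0 ≤ t → mfun n Θ f θ₁ t - t ^ 2 / 2 ≤ mfun n Θ f θ₁ t₁ - t₁ ^ 2 / 2 :=
    fun t h => hmax₁ (Set.mem_Ici.mpr h)
  have hconc : ∀ a b l m : ℝ, 0 ≤ a → 0 ≤ b → 0 ≤ l → 0 ≤ m → l + m = 1 →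
      l * mfun n Θ f θ₁ a + m * mfun n Θ f θ₁ b ≤ mfun n Θ f θ₁ (l * a + m * b) :=
    fun a b l m ha hb hl hm hlm => mfun_concave hconv hf hθ₁ hbdd hInt ha hb hl hm hlm
  have h4 : mfun n Θ f θ₁ (t₂ + d) ≤ mfun n Θ f θ₁ t₁ + t₁ * ((t₂ + d) - t₁) :=
    tangent_bound ht₁' hconc hmax₁' (by linarith)
  have h2 : mfun n Θ f θ₁ t₁ ≤ mfun n Θ f θ₂ (t₁ + d) :=
    mfun_sandwich hbdd hInt hθ₁ hθ₂ ht₁'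
  have h3 : mfun n Θ f θ₂ t₂ ≤ mfun n Θ f θ₁ (t₂ + d) := by
    have h := mfun_sandwich hbdd hInt hθ₂ hθ₁ ht₂'
    rwa [norm_sub_rev, ← hd] at h
  have h1 : mfun n Θ f θ₂ (t₁ + d) - (t₁ + d) ^ 2 / 2 ≤ mfun n Θ f θ₂ t₂ - t₂ ^ 2 / 2 :=
    hmax₂ (Set.mem_Ici.mpr (by linarith))
  have hsq : (t₂ - t₁) ^ 2 ≤ d ^ 2 + 4 * t₁ * d := by nlinarith [h1, h2, h3, h4]
  have habs : |t₂ - t₁| ≤ Real.sqrt (d ^ 2 + 4 * t₁ * d) := by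
    rw [← Real.sqrt_sq_eq_abs]
    exact Real.sqrt_le_sqrt hsq
  rw [abs_le] at habs
  exact ⟨max_le (by linarith [habs.1]) ht₂', by linarith [habs.2]⟩
end

section
/- The minimizer θ̂(x) of ½‖x − α‖₂² + f(α) over α ∈ Θ satisfies: ‖θ̂(x) − θ‖₂ maximizes over t ≥ 0 the function A_θ(t) := sup_{α∈Θ, ‖α−θ‖₂ ≤ t}(⟨x − θ, α − θ⟩ − f(α)) − t²/2. -/
/-! Expanding `‖x - α‖² = ‖(x - θ) - (α - θ)‖²` shows that minimizing `‖x - α‖² / 2 + f α` is the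
same as maximizing `g α := ⟪x - θ, α - θ⟫ - f α - ‖α - θ‖² / 2`. For `t ≥ 0` every `α` with
`‖α - θ‖ ≤ t` gives `⟪x - θ, α - θ⟫ - f α - t² / 2 ≤ g α ≤ g θ̂`, so `A_θ(t) ≤ g θ̂`, while `α = θ̂`
itself shows `g θ̂ ≤ A_θ(‖θ̂ - θ‖)`. -/

section SublevelSupremum

variable {α : Type*} {h ρ : α → ℝ} {S : Set α} {a : α}

theorem sub_sq_le_of_isMaxOn_sub_sq (hmax : IsMaxOn (fun b => h b - ρ b ^ 2 / 2) S a)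
    {b : α} (hb : b ∈ S) (hρb : 0 ≤ ρ b) {t : ℝ} (hbt : ρ b ≤ t) :
    h b - t ^ 2 / 2 ≤ h a - ρ a ^ 2 / 2 := by
  have hsq : ρ b ^ 2 ≤ t ^ 2 := pow_le_pow_left₀ hρb hbt 2
  have : h b - ρ b ^ 2 / 2 ≤ h a - ρ a ^ 2 / 2 := hmax hb
  linarith

theorem bddAbove_image_sublevel_of_isMaxOn_sub_sq (hρ : ∀ b, 0 ≤ ρ b)
    (hmax : IsMaxOn (fun b => h b - ρ b ^ 2 / 2) S a) (t : ℝ) :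
    BddAbove (h '' {b ∈ S | ρ b ≤ t}) := by
  refine ⟨h a - ρ a ^ 2 / 2 + t ^ 2 / 2, ?_⟩
  rintro _ ⟨b, ⟨hb, hbt⟩, rfl⟩
  linarith [sub_sq_le_of_isMaxOn_sub_sq hmax hb (hρ b) hbt]

theorem isMaxOn_sSup_image_sublevel_sub_sq (hρ : ∀ b, 0 ≤ ρ b) (ha : a ∈ S)
    (hmax : IsMaxOn (fun b => h b - ρ b ^ 2 / 2) S a) :
    IsMaxOn (fun t => sSup (h '' {b ∈ S | ρ b ≤ t}) - t ^ 2 / 2)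
      {t | ∃ b ∈ S, ρ b ≤ t} (ρ a) := by
  rintro t ⟨b₀, hb₀, hb₀t⟩
  have upper : sSup (h '' {b ∈ S | ρ b ≤ t}) - t ^ 2 / 2 ≤ h a - ρ a ^ 2 / 2 := by
    rw [sub_le_iff_le_add]
    refine csSup_le ⟨h b₀, b₀, ⟨hb₀, hb₀t⟩, rfl⟩ ?_
    rintro _ ⟨b, ⟨hb, hbt⟩, rfl⟩
    linarith [sub_sq_le_of_isMaxOn_sub_sq hmax hb (hρ b) hbt]
  have lower : h a ≤ sSup (h '' {b ∈ S | ρ b ≤ ρ a}) :=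
    le_csSup (bddAbove_image_sublevel_of_isMaxOn_sub_sq hρ hmax _) ⟨a, ⟨ha, le_rfl⟩, rfl⟩
  exact upper.trans (sub_le_sub_right lower _)

end SublevelSupremum

theorem isMaxOn_inner_sub_sub_sq_of_isMinOn {E : Type*} [NormedAddCommGroup E]
    [InnerProductSpace ℝ E] {f : E → ℝ} {Θ : Set E} {x θ a : E}
    (hmin : IsMinOn (fun α => ‖x - α‖ ^ 2 / 2 + f α) Θ a) :
    IsMaxOn (fun α => (inner ℝ (x - θ) (α - θ) - f α) - ‖α - θ‖ ^ 2 / 2) Θ a := by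
  have expand (α : E) :
      ‖x - α‖ ^ 2 = ‖x - θ‖ ^ 2 - 2 * inner ℝ (x - θ) (α - θ) + ‖α - θ‖ ^ 2 := by
    rw [← norm_sub_sq_real, sub_sub_sub_cancel_right]
  intro α hα
  have : ‖x - a‖ ^ 2 / 2 + f a ≤ ‖x - α‖ ^ 2 / 2 + f α := hmin hα
  show inner ℝ (x - θ) (α - θ) - f α - ‖α - θ‖ ^ 2 / 2
    ≤ inner ℝ (x - θ) (a - θ) - f a - ‖a - θ‖ ^ 2 / 2
  linarith [expand α, expand a]

theorem stmt11_general (n : ℕ) (Θ : Set (EuclideanSpace ℝ (Fin n)))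
    (f : EuclideanSpace ℝ (Fin n) → ℝ)
    (θ : EuclideanSpace ℝ (Fin n)) (hθ : θ ∈ Θ)
    (x : EuclideanSpace ℝ (Fin n)) (θhatx : EuclideanSpace ℝ (Fin n))
    (hmem : θhatx ∈ Θ)
    (hmin : IsMinOn (fun α => ‖x - α‖ ^ 2 / 2 + f α) Θ θhatx) :
    IsMaxOn
      (fun t : ℝ =>
        sSup ((fun α => (inner ℝ (x - θ) (α - θ) : ℝ) - f α) '' {α ∈ Θ | ‖α - θ‖ ≤ t})
          - t ^ 2 / 2)
      (Set.Ici 0) ‖θhatx - θ‖ :=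
  (isMaxOn_sSup_image_sublevel_sub_sq (fun _ => norm_nonneg _) hmem
    (isMaxOn_inner_sub_sub_sq_of_isMinOn hmin)).on_subset
    fun t ht => ⟨θ, hθ, by simpa using ht⟩

theorem stmt11 (n : ℕ) (Θ : Set (EuclideanSpace ℝ (Fin n)))
    (f : EuclideanSpace ℝ (Fin n) → ℝ)
    (hne : Θ.Nonempty) (hcl : IsClosed Θ) (hconv : Convex ℝ Θ) (hf : ConvexOn ℝ Θ f)
    (θ : EuclideanSpace ℝ (Fin n)) (hθ : θ ∈ Θ)
    (x : EuclideanSpace ℝ (Fin n)) (θhatx : EuclideanSpace ℝ (Fin n))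
    (hmem : θhatx ∈ Θ)
    (hmin : IsMinOn (fun α => ‖x - α‖ ^ 2 / 2 + f α) Θ θhatx) :
    IsMaxOn
      (fun t : ℝ =>
        sSup ((fun α => (inner ℝ (x - θ) (α - θ) : ℝ) - f α) '' {α ∈ Θ | ‖α - θ‖ ≤ t})
          - t ^ 2 / 2)
      (Set.Ici 0) ‖θhatx - θ‖ :=
  stmt11_general n Θ f θ hθ x θhatx hmem hmin
end

section
/- Let Θ = [−a, a] ⊂ ℝ with a > 0, X ~ N(θ, 1) with θ ∈ Θ, and let θ̂(X) be the projection of X onto [−a, a]. Then for every θ ∈ [−a, a], E_θ[(θ̂(X) − θ)²] ≥ 2(1 − Φ(2a))(θ² + a²), where Φ is the standard normal CDF. -/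
open MeasureTheory ProbabilityTheory Real Set

noncomputable def stdNormalCDF (x : ℝ) : ℝ := ((gaussianReal 0 1) (Set.Iic x)).toReal

lemma gauss_singleton (μ : ℝ) (x : ℝ) : gaussianReal μ 1 {x} = 0 :=
  (gaussianReal_absolutelyContinuous μ one_ne_zero) (measure_singleton x)

instance (μ : ℝ) : MeasureTheory.NullSingletonClass (gaussianReal μ 1) := ⟨fun x => gauss_singleton μ x⟩

lemma gauss_Ioi (μ t : ℝ) :
    ((gaussianReal μ 1) (Set.Ioi t)).toReal = 1 - ((gaussianReal μ 1) (Set.Iic t)).toReal := by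
  have h := measure_add_measure_compl (μ := gaussianReal μ 1) (measurableSet_Iic (a := t))
  rw [compl_Iic] at h
  have h1 : (gaussianReal μ 1) (Set.Iic t) ≠ ⊤ := measure_ne_top _ _
  have h2 : (gaussianReal μ 1) (Set.Ioi t) ≠ ⊤ := measure_ne_top _ _
  have := congrArg ENNReal.toReal h
  rw [ENNReal.toReal_add h1 h2, measure_univ, ENNReal.toReal_one] at this
  linarith

lemma gauss_shift (θ : ℝ) (s : Set ℝ) (hs : MeasurableSet s) :
    (gaussianReal θ 1) s = (gaussianReal 0 1) ((· + θ) ⁻¹' s) := by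
  have h := gaussianReal_map_add_const (μ := 0) (v := 1) θ
  rw [zero_add] at h
  rw [← h, Measure.map_apply (measurable_add_const θ) hs]

lemma gauss_neg (s : Set ℝ) (hs : MeasurableSet s) :
    (gaussianReal 0 1) s = (gaussianReal 0 1) ((fun x => -x) ⁻¹' s) := by
  have h := gaussianReal_map_const_mul (μ := 0) (v := 1) (-1)
  have h1 : (NNReal.mk ((-1:ℝ)^2) (sq_nonneg _)) * 1 = 1 := by
    ext; norm_num
  rw [mul_zero, h1] at h
  have : (fun x : ℝ => -x) = ((-1 : ℝ) * ·) := by ext x; ring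
  rw [this]
  conv_lhs => rw [← h]
  rw [Measure.map_apply (by fun_prop) hs]

lemma stdCDF_neg (x : ℝ) : stdNormalCDF (-x) = 1 - stdNormalCDF x := by
  unfold stdNormalCDF
  rw [gauss_neg _ measurableSet_Iic]
  have hpre : (fun y : ℝ => -y) ⁻¹' Set.Iic (-x) = Set.Ici x := by
    ext y; simp
  rw [hpre]
  rw [measure_congr (MeasureTheory.Ioi_ae_eq_Ici (a := x)).symm, ← gauss_Ioi]

lemma stdCDF_mono : Monotone stdNormalCDF := fun x y hxy => by
  unfold stdNormalCDF
  exact ENNReal.toReal_mono (measure_ne_top _ _) (measure_mono (Set.Iic_subset_Iic.2 hxy))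

theorem stmt15 (a θ : ℝ) (ha : 0 < a) (hθ : θ ∈ Set.Icc (-a) a) :
    2 * (1 - stdNormalCDF (2 * a)) * (θ ^ 2 + a ^ 2) ≤
      ∫ x, (max (-a) (min a x) - θ) ^ 2 ∂(gaussianReal θ 1) := by
  obtain ⟨hθ1, hθ2⟩ := hθ
  set μ := gaussianReal θ 1
  set c := 1 - stdNormalCDF (2 * a) with hc
  -- c nonneg
  have hΦle1 : stdNormalCDF (2 * a) ≤ 1 := by
    unfold stdNormalCDF
    exact ENNReal.toReal_mono (by simp) (measure_mono (Set.subset_univ _)) |>.trans_eq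
      (by simp)
  have hc0 : 0 ≤ c := by simp [hc]; linarith
  -- tail probabilities
  have hIoi : c ≤ (μ (Set.Ioi a)).toReal := by
    rw [gauss_shift θ _ measurableSet_Ioi]
    have hpre : (· + θ) ⁻¹' Set.Ioi a = Set.Ioi (a - θ) := by ext y; simp [lt_sub_iff_add_lt]
    rw [hpre, gauss_Ioi]
    have : stdNormalCDF (a - θ) ≤ stdNormalCDF (2 * a) := stdCDF_mono (by linarith)
    simp only [hc, stdNormalCDF] at this ⊢; linarith
  have hIio : c ≤ (μ (Set.Iio (-a))).toReal := by
    rw [gauss_shift θ _ measurableSet_Iio]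
    have hpre : (· + θ) ⁻¹' Set.Iio (-a) = Set.Iio (-a - θ) := by
      ext y; simp [lt_sub_iff_add_lt]
    rw [hpre]
    rw [measure_congr (MeasureTheory.Iio_ae_eq_Iic (a := -a - θ))]
    have h1 : stdNormalCDF (-(2 * a)) ≤ stdNormalCDF (-a - θ) := stdCDF_mono (by linarith)
    rw [stdCDF_neg] at h1
    simp only [hc, stdNormalCDF] at h1 ⊢; linarith
  -- integrand and lower bound function
  set f : ℝ → ℝ := fun x => (max (-a) (min a x) - θ) ^ 2 with hf
  set g : ℝ → ℝ := fun x =>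
    (Set.Ioi a).indicator (fun _ => (a - θ) ^ 2) x
      + (Set.Iio (-a)).indicator (fun _ => (a + θ) ^ 2) x with hg
  have hfg : ∀ x, g x ≤ f x := by
    intro x
    simp only [hg, hf, Set.indicator_apply, Set.mem_Ioi, Set.mem_Iio]
    by_cases h1 : a < x
    · have h2 : ¬ x < -a := by linarith
      simp only [if_pos h1, if_neg h2, add_zero]
      rw [min_eq_left h1.le, max_eq_right (by linarith)]
    · by_cases h2 : x < -a
      · simp only [if_neg h1, if_pos h2, zero_add]
        rw [min_eq_right (by linarith), max_eq_left (by linarith)]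
        ring_nf
        exact le_of_eq (by ring)
      · simp only [if_neg h1, if_neg h2, add_zero]
        positivity
  -- measurability and integrability
  have hfm : Measurable f := by fun_prop
  have hfint : Integrable f μ := by
    refine ⟨hfm.aestronglyMeasurable, ?_⟩
    apply HasFiniteIntegral.of_bounded (C := (2 * a) ^ 2)
    filter_upwards with x
    simp only [hf, Real.norm_eq_abs, abs_pow, sq_abs]
    have h1 : -a ≤ max (-a) (min a x) := le_max_left _ _
    have h2 : max (-a) (min a x) ≤ a := max_le (by linarith) (min_le_left _ _)
    have : |max (-a) (min a x) - θ| ≤ 2 * a := by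
      rw [abs_le]; constructor <;> linarith
    calc (max (-a) (min a x) - θ) ^ 2 = |max (-a) (min a x) - θ| ^ 2 := by rw [sq_abs]
      _ ≤ (2 * a) ^ 2 := by apply pow_le_pow_left₀ (abs_nonneg _) this
  have hgint1 : Integrable ((Set.Ioi a).indicator (fun _ : ℝ => (a - θ) ^ 2)) μ :=
    (integrable_const _).indicator measurableSet_Ioi
  have hgint2 : Integrable ((Set.Iio (-a)).indicator (fun _ : ℝ => (a + θ) ^ 2)) μ :=
    (integrable_const _).indicator measurableSet_Iio
  have hint_g : ∫ x, g x ∂μ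
      = (a - θ) ^ 2 * (μ (Set.Ioi a)).toReal + (a + θ) ^ 2 * (μ (Set.Iio (-a))).toReal := by
    rw [hg, integral_add hgint1 hgint2,
      integral_indicator_const _ measurableSet_Ioi,
      integral_indicator_const _ measurableSet_Iio]
    simp only [smul_eq_mul, measureReal_def]; ring
  have hle : ∫ x, g x ∂μ ≤ ∫ x, f x ∂μ :=
    integral_mono (hgint1.add hgint2) hfint hfg
  have key : 2 * c * (θ ^ 2 + a ^ 2) ≤ ∫ x, g x ∂μ := by
    rw [hint_g]
    have e1 : (a - θ) ^ 2 * c ≤ (a - θ) ^ 2 * (μ (Set.Ioi a)).toReal :=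
      mul_le_mul_of_nonneg_left hIoi (sq_nonneg _)
    have e2 : (a + θ) ^ 2 * c ≤ (a + θ) ^ 2 * (μ (Set.Iio (-a))).toReal :=
      mul_le_mul_of_nonneg_left hIio (sq_nonneg _)
    nlinarith [sq_nonneg (a - θ), sq_nonneg (a + θ)]
  exact key.trans hle
end

section
/- For the interval Θ = [−a, a] and the projection estimator θ̂ onto Θ in the model X ~ N(θ, 1), the normalized minimax risk satisfies inf_d sup_{θ∈Θ} E_θ[(d(X) − θ)²] / E_θ[(θ̂(X) − θ)²] ≤ 1/(4(1 − Φ(2a))). In particular, as a → 0 this upper bound tends to 1/2, so the worst-case normalized minimax constant C* is at most 1/2. -/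
open MeasureTheory ProbabilityTheory Real Set
open scoped NNReal

/-!
Take `d ≡ 0`, whose risk at `θ` is `θ²`. The projection estimator loses `(a + θ)²` on `{X ≤ -a}`
and `(a - θ)²` on `{X ≥ a}`, and for `|θ| ≤ a` each of these events has probability at least
`P(Z > 2a) = 1 - Φ(2a)`. Hence its risk is at least `2 (1 - Φ(2a)) (a² + θ²) ≥ 4 (1 - Φ(2a)) θ²`.
The limit holds because `Φ` is continuous (the Gaussian has no atoms) and `Φ(0) = 1/2` (symmetry).
-/

section CDF

variable {μ : Measure ℝ} [IsProbabilityMeasure μ] [NullSingletonClass μ]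

lemma continuous_cdf : Continuous (cdf μ) := by
  refine continuous_iff_continuousAt.2 fun x => ?_
  rw [(monotone_cdf μ).continuousAt_iff_leftLim_eq_rightLim, StieltjesFunction.rightLim_eq]
  have h := (cdf μ).measure_singleton x
  rw [measure_cdf, measure_singleton, eq_comm, ENNReal.ofReal_eq_zero] at h
  exact le_antisymm ((monotone_cdf μ).leftLim_le le_rfl) (by linarith)

lemma cdf_zero_of_map_neg (h : μ.map (fun x => -x) = μ) : cdf μ 0 = 1 / 2 := by
  have hsymm : μ.real (Iic 0) = μ.real (Ioi 0) := by
    conv_lhs => rw [← h]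
    rw [map_measureReal_apply (by fun_prop) measurableSet_Iic, measureReal_congr Ioi_ae_eq_Ici]
    congr 1
    ext x
    simp
  have htotal := measureReal_add_measureReal_compl (μ := μ) (measurableSet_Iic (a := (0 : ℝ)))
  rw [compl_Iic, probReal_univ] at htotal
  rw [cdf_eq_real]
  linarith

end CDF

lemma nullSingletonClass_gaussianReal (m : ℝ) {v : ℝ≥0} (hv : v ≠ 0) :
    NullSingletonClass (gaussianReal m v) :=
  ⟨fun _ => gaussianReal_absolutelyContinuous m hv Real.volume_singleton⟩

lemma stdNormalCDF_eq_cdf : stdNormalCDF = cdf (gaussianReal 0 1) := by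
  ext x
  rw [cdf_eq_real]
  rfl

lemma one_sub_stdNormalCDF (x : ℝ) : 1 - stdNormalCDF x = (gaussianReal 0 1).real (Ioi x) := by
  rw [stdNormalCDF_eq_cdf, cdf_eq_real, ← compl_Iic, probReal_compl_eq_one_sub measurableSet_Iic]

lemma stdNormalCDF_lt_one (x : ℝ) : stdNormalCDF x < 1 := by
  have hpos : 0 < (gaussianReal 0 1).real (Ioi x) :=
    ENNReal.toReal_pos (fun h => by simpa using gaussianReal_absolutelyContinuous' 0 one_ne_zero h)
      (measure_ne_top _ _)
  linarith [one_sub_stdNormalCDF x]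

@[fun_prop]
lemma continuous_stdNormalCDF : Continuous stdNormalCDF := by
  have := nullSingletonClass_gaussianReal 0 one_ne_zero
  rw [stdNormalCDF_eq_cdf]
  exact continuous_cdf

lemma stdNormalCDF_zero : stdNormalCDF 0 = 1 / 2 := by
  have := nullSingletonClass_gaussianReal 0 one_ne_zero
  rw [stdNormalCDF_eq_cdf]
  exact cdf_zero_of_map_neg (by simpa using gaussianReal_map_neg (μ := 0) (v := 1))

section GaussianTails

variable {m s t : ℝ} {v : ℝ≥0}

lemma real_Ioi_le_gaussianReal_real_Ici (h : t - m ≤ s) :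
    (gaussianReal 0 v).real (Ioi s) ≤ (gaussianReal m v).real (Ici t) := by
  have hshift : (gaussianReal 0 v).map (· + m) = gaussianReal m v := by
    simpa using gaussianReal_map_add_const (μ := 0) (v := v) m
  rw [← hshift, map_measureReal_apply (by fun_prop) measurableSet_Ici]
  exact measureReal_mono fun x (hx : s < x) => show t ≤ x + m by linarith

lemma real_Ioi_le_gaussianReal_real_Iic (h : m - t ≤ s) :
    (gaussianReal 0 v).real (Ioi s) ≤ (gaussianReal m v).real (Iic t) := by
  have hneg : (gaussianReal (-m) v).map (fun x => -x) = gaussianReal m v := by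
    simpa using gaussianReal_map_neg (μ := -m) (v := v)
  rw [← hneg, map_measureReal_apply (by fun_prop) measurableSet_Iic]
  convert real_Ioi_le_gaussianReal_real_Ici (m := -m) (t := -t) (by linarith) using 2
  ext x
  simp

end GaussianTails

lemma integral_sq_clamp_sub_ge {μ : Measure ℝ} [IsFiniteMeasure μ] {a : ℝ} (ha : 0 < a) (θ : ℝ) :
    μ.real (Iic (-a)) * (a + θ) ^ 2 + μ.real (Ici a) * (a - θ) ^ 2 ≤
      ∫ x, (max (-a) (min a x) - θ) ^ 2 ∂μ := by
  have hclamp_int : Integrable (fun x => (max (-a) (min a x) - θ) ^ 2) μ := by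
    refine .of_bound (by fun_prop) ((a + |θ|) ^ 2) (.of_forall fun x => ?_)
    rw [Real.norm_eq_abs, abs_pow, sq_le_sq₀ (abs_nonneg _) (by positivity)]
    refine (abs_sub _ _).trans (add_le_add ?_ le_rfl)
    exact abs_le.2 ⟨le_max_left _ _, max_le (by linarith) (min_le_left _ _)⟩
  have hleft := (integrable_const ((a + θ) ^ 2)).indicator (μ := μ) (measurableSet_Iic (a := -a))
  have hright := (integrable_const ((a - θ) ^ 2)).indicator (μ := μ) (measurableSet_Ici (a := a))
  calc μ.real (Iic (-a)) * (a + θ) ^ 2 + μ.real (Ici a) * (a - θ) ^ 2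
      = ∫ x, ((Iic (-a)).indicator (fun _ => (a + θ) ^ 2) x +
          (Ici a).indicator (fun _ => (a - θ) ^ 2) x) ∂μ := by
        rw [integral_add hleft hright,
          integral_indicator_const _ measurableSet_Iic, integral_indicator_const _ measurableSet_Ici,
          smul_eq_mul, smul_eq_mul]
    _ ≤ ∫ x, (max (-a) (min a x) - θ) ^ 2 ∂μ := by
        refine integral_mono (hleft.add hright) hclamp_int fun x => ?_
        rcases le_or_gt x (-a) with hx | hx
        · simp [indicator, hx, show ¬ a ≤ x by linarith, min_eq_right (show x ≤ a by linarith)]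
          nlinarith
        rcases le_or_gt a x with hx' | hx'
        · simp [indicator, hx', show ¬ x ≤ -a by linarith, show -a ≤ a by linarith]
        · simp [indicator, hx.not_ge, hx'.not_ge]
          positivity

lemma integral_sq_clamp_sub_gaussianReal_ge {a θ : ℝ} (ha : 0 < a) (hθ : θ ∈ Icc (-a) a) :
    (1 - stdNormalCDF (2 * a)) * ((a + θ) ^ 2 + (a - θ) ^ 2) ≤
      ∫ x, (max (-a) (min a x) - θ) ^ 2 ∂(gaussianReal θ 1) := by
  have hleft : 1 - stdNormalCDF (2 * a) ≤ (gaussianReal θ 1).real (Iic (-a)) := by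
    rw [one_sub_stdNormalCDF]; exact real_Ioi_le_gaussianReal_real_Iic (by linarith [hθ.2])
  have hright : 1 - stdNormalCDF (2 * a) ≤ (gaussianReal θ 1).real (Ici a) := by
    rw [one_sub_stdNormalCDF]; exact real_Ioi_le_gaussianReal_real_Ici (by linarith [hθ.1])
  nlinarith [integral_sq_clamp_sub_ge (μ := gaussianReal θ 1) ha θ,
    mul_le_mul_of_nonneg_right hleft (sq_nonneg (a + θ)),
    mul_le_mul_of_nonneg_right hright (sq_nonneg (a - θ))]

theorem stmt16 (a : ℝ) (ha : 0 < a) :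
    (∃ d : ℝ → ℝ, Measurable d ∧ ∀ θ ∈ Set.Icc (-a) a,
      ∫ x, (d x - θ) ^ 2 ∂(gaussianReal θ 1) ≤
        (1 / (4 * (1 - stdNormalCDF (2 * a)))) *
          ∫ x, (max (-a) (min a x) - θ) ^ 2 ∂(gaussianReal θ 1)) ∧
    Filter.Tendsto (fun b : ℝ => 1 / (4 * (1 - stdNormalCDF (2 * b))))
      (nhdsWithin 0 (Set.Ioi 0)) (nhds (1 / 2)) := by
  have hc : 0 < 1 - stdNormalCDF (2 * a) := sub_pos.2 (stdNormalCDF_lt_one _)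
  refine ⟨⟨fun _ => 0, measurable_const, fun θ hθ => ?_⟩, ?_⟩
  · have hrisk := integral_sq_clamp_sub_gaussianReal_ge ha hθ
    have hθsq : θ ^ 2 * (4 * (1 - stdNormalCDF (2 * a))) ≤
        (1 - stdNormalCDF (2 * a)) * ((a + θ) ^ 2 + (a - θ) ^ 2) := by
      nlinarith [mul_nonneg hc.le (mul_nonneg (sub_nonneg.2 hθ.2) (neg_le_iff_add_nonneg.1 hθ.1))]
    simp only [zero_sub, even_two.neg_pow, integral_const, probReal_univ, smul_eq_mul, one_mul]
    rw [div_mul_eq_mul_div, one_mul, le_div_iff₀ (by positivity)]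
    linarith
  · have hcont : Continuous fun b : ℝ => 1 / (4 * (1 - stdNormalCDF (2 * b))) :=
      continuous_const.div (by fun_prop)
        fun b => (mul_pos four_pos (sub_pos.2 (stdNormalCDF_lt_one _))).ne'
    convert (hcont.tendsto 0).mono_left nhdsWithin_le_nhds using 2
    norm_num [stdNormalCDF_zero]
end
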